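/- (Gronwall–Osgood comparison lemma for Stieltjes integrals) Let h: ℝ → ℝ be nondecreasing and left-continuous, ω: [0,∞) → [0,∞) continuous nondecreasing with ω(0) = 0 and ω(s) > 0 for s > 0. Fix u₀ > 0 and define Ω(r) = ∫_{u₀}^r ds/ω(s) for r > 0; let β = lim_{r→∞} Ω(r). Suppose ψ: [a,b] → [0,∞) is bounded, κ > 0 satisfies ψ(s) ≤ κ + ∫_{[a,s)} ω(ψ(σ)) dμ_h(σ) for all s ∈ [a,b], and Ω(κ) + h(b) − h(a) < β. Then ψ(s) ≤ Ω⁻¹(Ω(κ) + h(s) − h(a)) for all s ∈ [a,b]. -/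

import Mathlib

open Set MeasureTheory intervalIntegral

lemma omInt (ω : ℝ → ℝ) (hωc : ContinuousOn ω (Set.Ici 0))
    (hωpos : ∀ s : ℝ, 0 < s → 0 < ω s) (x y : ℝ) (hx : 0 < x) (hy : 0 < y) :
    IntervalIntegrable (fun u => 1 / ω u) volume x y := by
  apply ContinuousOn.intervalIntegrable
  have hsub : Set.uIcc x y ⊆ Set.Ici (min x y) := by
    rw [Set.uIcc]; exact Set.Icc_subset_Ici_self
  have hmin : 0 < min x y := lt_min hx hy
  have hpos : ∀ u ∈ Set.uIcc x y, 0 < u := fun u hu => lt_of_lt_of_le hmin (hsub hu)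
  exact ContinuousOn.div continuousOn_const
    (hωc.mono (fun u hu => le_of_lt (hpos u hu)))
    (fun u hu => ne_of_gt (hωpos u (hpos u hu)))

lemma omDiff (ω : ℝ → ℝ) (hωc : ContinuousOn ω (Set.Ici 0))
    (hωpos : ∀ s : ℝ, 0 < s → 0 < ω s) (u₀ : ℝ) (hu₀ : 0 < u₀)
    (x y : ℝ) (hx : 0 < x) (hy : 0 < y) :
    (∫ u in u₀..y, 1 / ω u) - (∫ u in u₀..x, 1 / ω u) = ∫ u in x..y, 1 / ω u := by
  have := intervalIntegral.integral_add_adjacent_intervals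
    (omInt ω hωc hωpos u₀ x hu₀ hx) (omInt ω hωc hωpos x y hx hy)
  linarith

lemma omBounds (ω : ℝ → ℝ) (hωc : ContinuousOn ω (Set.Ici 0))
    (hωm : MonotoneOn ω (Set.Ici 0)) (hωpos : ∀ s : ℝ, 0 < s → 0 < ω s)
    (u₀ : ℝ) (hu₀ : 0 < u₀) (x y : ℝ) (hx : 0 < x) (hxy : x ≤ y) :
    ω x * ((∫ u in u₀..y, 1 / ω u) - ∫ u in u₀..x, 1 / ω u) ≤ y - x ∧
    y - x ≤ ω y * ((∫ u in u₀..y, 1 / ω u) - ∫ u in u₀..x, 1 / ω u) := by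
  have hy : 0 < y := lt_of_lt_of_le hx hxy
  have hωx := hωpos x hx
  have hωy := hωpos y hy
  rw [omDiff ω hωc hωpos u₀ hu₀ x y hx hy]
  have hxm : x ∈ Set.Ici (0:ℝ) := le_of_lt hx
  have hI := omInt ω hωc hωpos x y hx hy
  constructor
  · have h1 : (∫ u in x..y, 1 / ω u) ≤ ∫ u in x..y, 1 / ω x := by
      apply intervalIntegral.integral_mono_on hxy hI intervalIntegrable_const
      intro u hu
      exact one_div_le_one_div_of_le hωx (hωm hxm (le_trans (le_of_lt hx) hu.1) hu.1)
    rw [intervalIntegral.integral_const, smul_eq_mul] at h1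
    have h2 : ω x * (∫ u in x..y, 1 / ω u) ≤ ω x * ((y - x) * (1 / ω x)) := by nlinarith
    calc ω x * (∫ u in x..y, 1 / ω u) ≤ ω x * ((y - x) * (1 / ω x)) := h2
      _ = y - x := by field_simp
  · have h1 : (∫ u in x..y, 1 / ω y) ≤ ∫ u in x..y, 1 / ω u := by
      apply intervalIntegral.integral_mono_on hxy intervalIntegrable_const hI
      intro u hu
      have hu0 : 0 < u := lt_of_lt_of_le hx hu.1
      exact one_div_le_one_div_of_le (hωpos u hu0) (hωm (le_of_lt hu0) (le_of_lt hy) hu.2)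
    rw [intervalIntegral.integral_const, smul_eq_mul] at h1
    have h2 : ω y * ((y - x) * (1 / ω y)) ≤ ω y * (∫ u in x..y, 1 / ω u) := by nlinarith
    calc y - x = ω y * ((y - x) * (1 / ω y)) := by field_simp
      _ ≤ _ := h2

lemma omStrict (ω : ℝ → ℝ) (hωc : ContinuousOn ω (Set.Ici 0))
    (hωm : MonotoneOn ω (Set.Ici 0)) (hωpos : ∀ s : ℝ, 0 < s → 0 < ω s)
    (u₀ : ℝ) (hu₀ : 0 < u₀) (x y : ℝ) (hx : 0 < x) (hxy : x < y) :
    (∫ u in u₀..x, 1 / ω u) < ∫ u in u₀..y, 1 / ω u := by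
  have h := (omBounds ω hωc hωm hωpos u₀ hu₀ x y hx (le_of_lt hxy)).2
  have hωy := hωpos y (lt_trans hx hxy)
  nlinarith

/-- Left-continuity of `h` at every point. -/
def LeftCont (h : ℝ → ℝ) : Prop := ∀ t : ℝ, ContinuousWithinAt h (Set.Iio t) t

set_option maxHeartbeats 1000000 in
/-- Gronwall–Osgood comparison lemma for Stieltjes integrals.  Here
`Ω r = ∫_{u₀}^r ds/ω s`, the hypothesis `∃ r₀ > 0, Ω κ + h b - h a < Ω r₀` expresses
`Ω κ + h b - h a < β = lim_{r→∞} Ω r`, and the conclusion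
`Ω r = Ω κ + (h s - h a) → ψ s ≤ r` expresses `ψ s ≤ Ω⁻¹(Ω κ + h s - h a)`. -/
theorem stmt17 (h : ℝ → ℝ) (hmono : Monotone h) (hlc : LeftCont h)
    (μ : Measure ℝ)
    (hμ : ∀ a b : ℝ, a ≤ b → μ (Set.Ico a b) = ENNReal.ofReal (h b - h a))
    (ω : ℝ → ℝ) (hωc : ContinuousOn ω (Set.Ici 0)) (hωm : MonotoneOn ω (Set.Ici 0))
    (hω0 : ω 0 = 0) (hωpos : ∀ s : ℝ, 0 < s → 0 < ω s)
    (u₀ : ℝ) (hu₀ : 0 < u₀)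
    (a b : ℝ) (hab : a ≤ b) (ψ : ℝ → ℝ)
    (hψnn : ∀ s ∈ Set.Icc a b, 0 ≤ ψ s)
    (hψbd : ∃ M : ℝ, ∀ s ∈ Set.Icc a b, ψ s ≤ M)
    (hint : IntegrableOn (fun σ => ω (ψ σ)) (Set.Ico a b) μ)
    (κ : ℝ) (hκ : 0 < κ)
    (hineq : ∀ s ∈ Set.Icc a b, ψ s ≤ κ + ∫ σ in Set.Ico a s, ω (ψ σ) ∂μ)
    (hβ : ∃ r₀ > 0,
      (∫ u in u₀..κ, 1 / ω u) + (h b - h a) < ∫ u in u₀..r₀, 1 / ω u) :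
    ∀ s ∈ Set.Icc a b, ∀ r > 0,
      (∫ u in u₀..r, 1 / ω u) = (∫ u in u₀..κ, 1 / ω u) + (h s - h a) →
        ψ s ≤ r := by
  clear hβ
  obtain ⟨M, hM⟩ := hψbd
  set B := max M 0 with hBdef
  have hB0 : (0:ℝ) ≤ B := le_max_right _ _
  have hωB0 : 0 ≤ ω B := by
    have := hωm (le_refl (0:ℝ)) hB0 hB0
    rwa [hω0] at this
  -- basic facts about ω ∘ ψ
  have hψle : ∀ σ ∈ Set.Icc a b, ψ σ ≤ B := fun σ hσ => le_trans (hM σ hσ) (le_max_left _ _)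
  have hωψnn : ∀ σ ∈ Set.Icc a b, 0 ≤ ω (ψ σ) := by
    intro σ hσ
    have := hωm (le_refl (0:ℝ)) (hψnn σ hσ) (hψnn σ hσ)
    rwa [hω0] at this
  have hωψle : ∀ σ ∈ Set.Icc a b, ω (ψ σ) ≤ ω B := fun σ hσ =>
    hωm (hψnn σ hσ) hB0 (hψle σ hσ)
  -- measure facts
  have hμfin : ∀ {S : Set ℝ}, S ⊆ Set.Ico a b → μ S ≠ ⊤ := by
    intro S hS
    refine ne_of_lt (lt_of_le_of_lt (measure_mono hS) ?_)
    rw [hμ a b hab]; exact ENNReal.ofReal_lt_top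
  have hμR : ∀ s t : ℝ, s ≤ t → (μ (Set.Ico s t)).toReal = h t - h s := by
    intro s t hst
    rw [hμ s t hst, ENNReal.toReal_ofReal (sub_nonneg.mpr (hmono hst))]
  have hintsub : ∀ {S : Set ℝ}, S ⊆ Set.Ico a b →
      IntegrableOn (fun σ => ω (ψ σ)) S μ := fun hS => hint.mono_set hS
  have hIcoIcc : Set.Ico a b ⊆ Set.Icc a b := Set.Ico_subset_Icc_self
  -- integral bounds on subsets
  have hIntNN : ∀ {S : Set ℝ}, MeasurableSet S → S ⊆ Set.Ico a b →
      0 ≤ ∫ σ in S, ω (ψ σ) ∂μ := by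
    intro S hmS hS
    exact setIntegral_nonneg hmS (fun σ hσ => hωψnn σ (hIcoIcc (hS hσ)))
  have hIntLE : ∀ {S : Set ℝ}, MeasurableSet S → S ⊆ Set.Ico a b → ∀ K : ℝ,
      (∀ σ ∈ S, ω (ψ σ) ≤ K) → (∫ σ in S, ω (ψ σ) ∂μ) ≤ K * (μ S).toReal := by
    intro S hmS hS K hSK
    have hc : IntegrableOn (fun _ => K) S μ :=
      (integrableOn_const_iff).mpr (Or.inr (lt_top_iff_ne_top.mpr (hμfin hS)))
    have := setIntegral_mono_on (hintsub hS) hc hmS hSK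
    rwa [setIntegral_const, smul_eq_mul, mul_comm] at this
  -- the comparison function φ
  set φ : ℝ → ℝ := fun s => κ + ∫ σ in Set.Ico a s, ω (ψ σ) ∂μ with hφdef
  have hφa : φ a = κ := by
    simp [hφdef, Set.Ico_self]
  have hψφ : ∀ s ∈ Set.Icc a b, ψ s ≤ φ s := by
    intro s hs; simpa [hφdef] using hineq s hs
  have hφsplit : ∀ s t : ℝ, a ≤ s → s ≤ t → t ≤ b →
      φ t = φ s + ∫ σ in Set.Ico s t, ω (ψ σ) ∂μ := by
    intro s t has hst htb
    have hU : Set.Ico a s ∪ Set.Ico s t = Set.Ico a t := Set.Ico_union_Ico_eq_Ico has hst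
    have hd : Disjoint (Set.Ico a s) (Set.Ico s t) := by
      apply Set.disjoint_left.mpr
      rintro x ⟨_, hx2⟩ ⟨hx3, _⟩
      exact absurd hx3 (not_le.mpr hx2)
    have h1 : Set.Ico a s ⊆ Set.Ico a b :=
      Set.Ico_subset_Ico le_rfl (le_trans hst htb)
    have h2 : Set.Ico s t ⊆ Set.Ico a b := Set.Ico_subset_Ico has htb
    simp only [hφdef]
    rw [← hU, setIntegral_union hd measurableSet_Ico (hintsub h1) (hintsub h2)]
    ring
  have hφκ : ∀ s, a ≤ s → s ≤ b → κ ≤ φ s := by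
    intro s has hsb
    have : 0 ≤ ∫ σ in Set.Ico a s, ω (ψ σ) ∂μ :=
      hIntNN measurableSet_Ico (Set.Ico_subset_Ico le_rfl hsb)
    simp only [hφdef]; linarith
  have hφpos : ∀ s, a ≤ s → s ≤ b → 0 < φ s := fun s has hsb => lt_of_lt_of_le hκ (hφκ s has hsb)
  have hφmono : ∀ s t, a ≤ s → s ≤ t → t ≤ b → φ s ≤ φ t := by
    intro s t has hst htb
    rw [hφsplit s t has hst htb]
    have : 0 ≤ ∫ σ in Set.Ico s t, ω (ψ σ) ∂μ :=
      hIntNN measurableSet_Ico (Set.Ico_subset_Ico has htb)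
    linarith
  have hφdiff : ∀ s t, a ≤ s → s ≤ t → t ≤ b → φ t - φ s ≤ ω B * (h t - h s) := by
    intro s t has hst htb
    rw [hφsplit s t has hst htb]
    have h2 : Set.Ico s t ⊆ Set.Ico a b := Set.Ico_subset_Ico has htb
    have := hIntLE measurableSet_Ico h2 (ω B) (fun σ hσ => hωψle σ (hIcoIcc (h2 hσ)))
    rw [hμR s t hst] at this
    linarith
  -- the key Gronwall bound with margin ε
  have key : ∀ ε : ℝ, 0 < ε → ∀ s ∈ Set.Icc a b,
      (∫ u in u₀..(φ s), 1 / ω u) ≤ (∫ u in u₀..κ, 1 / ω u) + (1 + ε) * (h s - h a) := by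
    intro ε hε
    set S : Set ℝ := {s | s ∈ Set.Icc a b ∧ ∀ t, a ≤ t → t ≤ s →
      (∫ u in u₀..(φ t), 1 / ω u) ≤ (∫ u in u₀..κ, 1 / ω u) + (1 + ε) * (h t - h a)} with hSdef
    have hPa : (∫ u in u₀..(φ a), 1 / ω u) ≤ (∫ u in u₀..κ, 1 / ω u) + (1 + ε) * (h a - h a) := by
      rw [hφa, sub_self, mul_zero, add_zero]
    have haS : a ∈ S := by
      refine ⟨⟨le_refl a, hab⟩, ?_⟩
      intro t h1 h2
      have : t = a := le_antisymm h2 h1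
      subst this
      exact hPa
    have hbddS : BddAbove S := ⟨b, fun s hs => hs.1.2⟩
    have hSne : S.Nonempty := ⟨a, haS⟩
    set c := sSup S with hcdef
    have hac : a ≤ c := le_csSup hbddS haS
    have hcb : c ≤ b := csSup_le hSne (fun s hs => hs.1.2)
    have hPlt : ∀ t, a ≤ t → t < c →
        (∫ u in u₀..(φ t), 1 / ω u) ≤ (∫ u in u₀..κ, 1 / ω u) + (1 + ε) * (h t - h a) := by
      intro t hat htc
      obtain ⟨s, hsS, hts⟩ := exists_lt_of_lt_csSup hSne htc
      exact hsS.2 t hat (le_of_lt hts)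
    have hωκ := hωpos κ hκ
    have hPc : (∫ u in u₀..(φ c), 1 / ω u) ≤ (∫ u in u₀..κ, 1 / ω u) + (1 + ε) * (h c - h a) := by
      rcases eq_or_lt_of_le hac with heq | hlt
      · rw [← heq]; exact hPa
      · refine le_of_forall_pos_le_add ?_
        intro ε₂ hε₂
        set δ₂ := ε₂ * ω κ / (ω B + 1) with hδ₂def
        have hδ₂ : 0 < δ₂ := by positivity
        have hcw := hlc c
        rw [Metric.continuousWithinAt_iff] at hcw
        obtain ⟨δ', hδ'0, hδ'⟩ := hcw δ₂ hδ₂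
        set t := max ((a + c) / 2) (c - δ' / 2) with htdef
        have h2t : a < t := lt_of_lt_of_le (by linarith) (le_max_left _ _)
        have htc : t < c := by
          apply max_lt
          · linarith
          · linarith
        have h1t : |h t - h c| < δ₂ := by
          apply hδ' (Set.mem_Iio.mpr htc)
          rw [Real.dist_eq, abs_lt]
          have : c - δ' / 2 ≤ t := le_max_right _ _
          constructor <;> linarith
        have hta : a ≤ t := le_of_lt h2t
        have htb : t ≤ b := le_trans (le_of_lt htc) hcb
        have hhtc : h t ≤ h c := hmono (le_of_lt htc)
        have hhat : h a ≤ h t := hmono hta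
        have hPt := hPlt t hta htc
        have hφt := hφpos t hta htb
        have hφtc : φ t ≤ φ c := hφmono t c hta (le_of_lt htc) hcb
        have hB1 := (omBounds ω hωc hωm hωpos u₀ hu₀ (φ t) (φ c) hφt hφtc).1
        have hB2 := (omBounds ω hωc hωm hωpos u₀ hu₀ (φ t) (φ c) hφt hφtc).2
        have hωφc := hωpos (φ c) (hφpos c hac hcb)
        have hX : 0 ≤ (∫ u in u₀..(φ c), 1 / ω u) - (∫ u in u₀..(φ t), 1 / ω u) := by
          have h0 : ω (φ c) * 0 ≤ ω (φ c) *
              ((∫ u in u₀..(φ c), 1 / ω u) - (∫ u in u₀..(φ t), 1 / ω u)) := by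
            rw [mul_zero]
            refine le_trans ?_ hB2
            linarith
          exact le_of_mul_le_mul_left h0 hωφc
        have hd := hφdiff t c hta (le_of_lt htc) hcb
        have hωφt : ω κ ≤ ω (φ t) := hωm (le_of_lt hκ) (le_of_lt hφt) (hφκ t hta htb)
        have habs : h c - h t < δ₂ := by
          rw [abs_lt] at h1t; linarith
        have hδ₂eq : δ₂ * (ω B + 1) = ε₂ * ω κ := by
          rw [hδ₂def]; field_simp
        have hXle : ω κ * ((∫ u in u₀..(φ c), 1 / ω u) - (∫ u in u₀..(φ t), 1 / ω u)) ≤ ε₂ * ω κ := by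
          have e1 : ω κ * ((∫ u in u₀..(φ c), 1 / ω u) - (∫ u in u₀..(φ t), 1 / ω u)) ≤
              ω (φ t) * ((∫ u in u₀..(φ c), 1 / ω u) - (∫ u in u₀..(φ t), 1 / ω u)) :=
            mul_le_mul_of_nonneg_right hωφt hX
          have e2 : ω B * (h c - h t) ≤ ω B * δ₂ := mul_le_mul_of_nonneg_left habs.le hωB0
          have e3 : ω B * δ₂ ≤ (ω B + 1) * δ₂ := by
            have h9 : (ω B + 1) * δ₂ = ω B * δ₂ + δ₂ := by ring
            linarith [hδ₂.le]
          have e4 : (ω B + 1) * δ₂ = ε₂ * ω κ := by rw [mul_comm]; exact hδ₂eq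
          exact le_trans e1 (le_trans hB1 (le_trans hd (le_trans e2 (le_of_le_of_eq e3 e4))))
        have hXe : (∫ u in u₀..(φ c), 1 / ω u) - (∫ u in u₀..(φ t), 1 / ω u) ≤ ε₂ :=
          le_of_mul_le_mul_left (by linarith [hXle]) hωκ
        have e5 : (1 + ε) * (h t - h a) ≤ (1 + ε) * (h c - h a) :=
          mul_le_mul_of_nonneg_left (by linarith) (by linarith)
        linarith
    have hcS : c ∈ S := by
      refine ⟨⟨hac, hcb⟩, ?_⟩
      intro t hat htc
      rcases lt_or_eq_of_le htc with hlt | heq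
      · exact hPlt t hat hlt
      · subst heq; exact hPc
    have hceq : c = b := by
      by_contra hne
      have hclt : c < b := lt_of_le_of_ne hcb hne
      have hcmem : c ∈ Set.Icc a b := ⟨hac, hcb⟩
      set mc := (μ {c}).toReal with hmcdef
      have hmc0 : 0 ≤ mc := ENNReal.toReal_nonneg
      have hψc0 : 0 ≤ ψ c := hψnn c hcmem
      have hψcφ : ψ c ≤ φ c := hψφ c hcmem
      have hφcpos := hφpos c hac hcb
      have hωψc0 : 0 ≤ ω (ψ c) := hωψnn c hcmem
      have hωψcφ : ω (ψ c) ≤ ω (φ c) := hωm hψc0 (le_of_lt hφcpos) hψcφ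
      set A := φ c + ω (ψ c) * mc with hAdef
      have hφcA : φ c ≤ A := by nlinarith
      have hApos : 0 < A := lt_of_lt_of_le hφcpos hφcA
      have hωA : 0 < ω A := hωpos A hApos
      have hcont : ContinuousWithinAt ω (Set.Ici 0) A := hωc A (le_of_lt hApos)
      rw [Metric.continuousWithinAt_iff] at hcont
      obtain ⟨δ, hδ0, hδ⟩ := hcont (ε * ω A) (by positivity)
      set η := δ / 2 with hηdef
      have hη0 : 0 < η := by positivity
      have hηprop : ∀ x, A ≤ x → x ≤ A + η → ω x ≤ (1 + ε) * ω A := by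
        intro x hx1 hx2
        have hx0 : x ∈ Set.Ici (0:ℝ) := le_trans (le_of_lt hApos) hx1
        have hdist : dist x A < δ := by
          rw [Real.dist_eq, abs_lt]
          constructor <;> linarith
        have hh := hδ hx0 hdist
        rw [Real.dist_eq, abs_lt] at hh
        have h9 : (1 + ε) * ω A = ω A + ε * ω A := by ring
        linarith
      -- find t ∈ (c, b] with small μ (Ioo c t)
      obtain ⟨t, hct, htb, hsmall⟩ :
          ∃ t, c < t ∧ t ≤ b ∧ (μ (Set.Ioo c t)).toReal ≤ η / (ω B + 1) := by
        have hAnti : Antitone (fun n : ℕ => Set.Ioo c (c + (b - c) / (n + 1))) := by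
          intro n m hnm
          apply Set.Ioo_subset_Ioo_right
          have h1 : ((n:ℝ) + 1) ≤ (m:ℝ) + 1 := by exact_mod_cast Nat.succ_le_succ hnm
          have h2 : (b - c) / ((m:ℝ) + 1) ≤ (b - c) / ((n:ℝ) + 1) :=
            div_le_div_of_nonneg_left (by linarith) (by positivity) h1
          linarith
        have hInter : ⋂ n : ℕ, Set.Ioo c (c + (b - c) / (n + 1)) = (∅ : Set ℝ) := by
          apply Set.eq_empty_iff_forall_notMem.mpr
          intro x hx
          rw [Set.mem_iInter] at hx
          have hcx : 0 < x - c := sub_pos.mpr (hx 0).1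
          obtain ⟨n, hn⟩ := exists_nat_gt ((b - c) / (x - c))
          have hlt2 : (b - c) / ((n:ℝ) + 1) < x - c := by
            rw [div_lt_iff₀ (by positivity)]
            have h2 : (b - c) / (x - c) < (n:ℝ) + 1 := lt_trans hn (by linarith)
            rw [div_lt_iff₀ hcx] at h2
            linarith
          have := (hx n).2
          linarith
        have hsub0 : Set.Ioo c (c + (b - c) / ((0:ℕ) + 1)) ⊆ Set.Ico a b := by
          intro x hx
          refine ⟨le_trans hac (le_of_lt hx.1), lt_of_lt_of_le hx.2 ?_⟩
          push_cast
          linarith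
        have hfin0 : ∃ n : ℕ, μ (Set.Ioo c (c + (b - c) / (n + 1))) ≠ ⊤ := ⟨0, hμfin hsub0⟩
        have htend := tendsto_measure_iInter_atTop (μ := μ)
          (fun n => measurableSet_Ioo.nullMeasurableSet) hAnti hfin0
        rw [hInter] at htend
        simp only [measure_empty] at htend
        have hpos' : (0:ENNReal) < ENNReal.ofReal (η / (ω B + 1)) := by
          rw [ENNReal.ofReal_pos]
          exact div_pos hη0 (by linarith)
        obtain ⟨n, hn⟩ := (htend.eventually_lt_const hpos').exists
        have hsubn : Set.Ioo c (c + (b - c) / ((n:ℝ) + 1)) ⊆ Set.Ico a b := by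
          intro x hx
          refine ⟨le_trans hac (le_of_lt hx.1), lt_of_lt_of_le hx.2 ?_⟩
          have h1 : (b - c) / ((n:ℝ) + 1) ≤ b - c := by
            apply div_le_self (by linarith)
            have := Nat.cast_nonneg (α := ℝ) n
            linarith
          linarith
        refine ⟨c + (b - c) / ((n:ℝ) + 1), ?_, ?_, ?_⟩
        · have : 0 < (b - c) / ((n:ℝ) + 1) := div_pos (by linarith) (by positivity)
          linarith
        · have h1 : (b - c) / ((n:ℝ) + 1) ≤ b - c := by
            apply div_le_self (by linarith)
            have := Nat.cast_nonneg (α := ℝ) n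
            linarith
          linarith
        · have hfinn : μ (Set.Ioo c (c + (b - c) / ((n:ℝ) + 1))) ≠ ⊤ := hμfin hsubn
          have := (ENNReal.lt_ofReal_iff_toReal_lt hfinn).mp hn
          exact le_of_lt this
      -- split at the atom c
      have hsing : ∀ u, c < u → u ≤ b →
          (μ (Set.Ico c u)).toReal = mc + (μ (Set.Ioo c u)).toReal ∧
          φ u = A + ∫ σ in Set.Ioo c u, ω (ψ σ) ∂μ := by
        intro u hcu hub
        have hins : insert c (Set.Ioo c u) = Set.Ico c u := Set.Ioo_insert_left hcu
        have hdisj : Disjoint ({c} : Set ℝ) (Set.Ioo c u) := by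
          rw [Set.disjoint_singleton_left]
          intro hx
          exact absurd hx.1 (lt_irrefl c)
        have hU : ({c} : Set ℝ) ∪ Set.Ioo c u = Set.Ico c u := by
          rw [Set.singleton_union, hins]
        have hsub1 : ({c} : Set ℝ) ⊆ Set.Ico a b := by
          intro x hx
          rw [Set.mem_singleton_iff] at hx
          subst hx
          exact ⟨hac, hclt⟩
        have hsub2 : Set.Ioo c u ⊆ Set.Ico a b := fun x hx =>
          ⟨le_trans hac (le_of_lt hx.1), lt_of_lt_of_le hx.2 hub⟩
        constructor
        · rw [← hU, measure_union hdisj measurableSet_Ioo,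
            ENNReal.toReal_add (hμfin hsub1) (hμfin hsub2), hmcdef]
        · rw [hφsplit c u hac (le_of_lt hcu) hub, ← hU,
            setIntegral_union hdisj measurableSet_Ioo (hintsub hsub1) (hintsub hsub2),
            integral_singleton]
          rw [hAdef, measureReal_def, ← hmcdef, smul_eq_mul]
          ring
      have htS : t ∈ S := by
        refine ⟨⟨le_trans hac (le_of_lt hct), htb⟩, ?_⟩
        intro u hau hut
        rcases le_or_gt u c with huc | hcu
        · exact hcS.2 u hau huc
        · have hub : u ≤ b := le_trans hut htb
          obtain ⟨hμsp, hIsp⟩ := hsing u hcu hub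
          set Ju := (μ (Set.Ioo c u)).toReal with hJudef
          have hJu0 : 0 ≤ Ju := ENNReal.toReal_nonneg
          have hsubt : Set.Ioo c t ⊆ Set.Ico a b := fun x hx =>
            ⟨le_trans hac (le_of_lt hx.1), lt_of_lt_of_le hx.2 htb⟩
          have hJut : Ju ≤ η / (ω B + 1) := by
            refine le_trans ?_ hsmall
            exact ENNReal.toReal_mono (hμfin hsubt)
              (measure_mono (Set.Ioo_subset_Ioo_right hut))
          have hsub2 : Set.Ioo c u ⊆ Set.Ico a b := fun x hx =>
            ⟨le_trans hac (le_of_lt hx.1), lt_of_lt_of_le hx.2 hub⟩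
          have hInn : 0 ≤ ∫ σ in Set.Ioo c u, ω (ψ σ) ∂μ := hIntNN measurableSet_Ioo hsub2
          have hAφu : A ≤ φ u := by rw [hIsp]; linarith
          have hφupos : 0 < φ u := lt_of_lt_of_le hApos hAφu
          have hφuBd : φ u ≤ A + η := by
            have hle := hIntLE measurableSet_Ioo hsub2 (ω B)
              (fun σ hσ => hωψle σ (hIcoIcc (hsub2 hσ)))
            rw [← hJudef] at hle
            rw [hIsp]
            have hd1 : (0:ℝ) < ω B + 1 := by linarith
            have h1 : ω B * Ju ≤ ω B * (η / (ω B + 1)) := mul_le_mul_of_nonneg_left hJut hωB0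
            have h2 : ω B * (η / (ω B + 1)) ≤ η := by
              rw [mul_comm, div_mul_eq_mul_div, div_le_iff₀ hd1]
              have h9 : η * (ω B + 1) = η * ω B + η := by ring
              linarith [hη0.le]
            linarith
          have hωφu : ω (φ u) ≤ (1 + ε) * ω A := hηprop (φ u) hAφu hφuBd
          have hS1 : (∫ v in u₀..A, 1 / ω v) - (∫ v in u₀..(φ c), 1 / ω v) ≤ mc := by
            have hb1 := (omBounds ω hωc hωm hωpos u₀ hu₀ (φ c) A hφcpos hφcA).1
            have hωφc := hωpos (φ c) hφcpos
            have he : A - φ c = ω (ψ c) * mc := by rw [hAdef]; ring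
            have h1 : ω (ψ c) * mc ≤ ω (φ c) * mc := mul_le_mul_of_nonneg_right hωψcφ hmc0
            exact le_of_mul_le_mul_left (le_trans (le_of_le_of_eq hb1 he) h1) hωφc
          have hIB : (∫ σ in Set.Ioo c u, ω (ψ σ) ∂μ) ≤ ω (φ u) * Ju := by
            have hle := hIntLE measurableSet_Ioo hsub2 (ω (φ u)) ?_
            · rwa [← hJudef] at hle
            · intro σ hσ
              have hσab : σ ∈ Set.Icc a b := hIcoIcc (hsub2 hσ)
              have h1 : ψ σ ≤ φ σ := hψφ σ hσab
              have h2 : φ σ ≤ φ u := hφmono σ u hσab.1 (le_of_lt hσ.2) hub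
              exact hωm (hψnn σ hσab) (le_of_lt hφupos) (le_trans h1 h2)
          have hS2 : (∫ v in u₀..(φ u), 1 / ω v) - (∫ v in u₀..A, 1 / ω v) ≤ (1 + ε) * Ju := by
            have hb2 := (omBounds ω hωc hωm hωpos u₀ hu₀ A (φ u) hApos hAφu).1
            have hφuA : φ u - A = ∫ σ in Set.Ioo c u, ω (ψ σ) ∂μ := by rw [hIsp]; ring
            have h1 : ω (φ u) * Ju ≤ ((1 + ε) * ω A) * Ju :=
              mul_le_mul_of_nonneg_right hωφu hJu0
            have h3 : ((1 + ε) * ω A) * Ju = ω A * ((1 + ε) * Ju) := by ring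
            exact le_of_mul_le_mul_left
              (le_trans (le_of_le_of_eq hb2 hφuA) (le_trans hIB (le_of_le_of_eq h1 h3))) hωA
          have hhc : h u - h c = mc + Ju := by
            rw [← hμR c u (le_of_lt hcu), hμsp]
          have hPcc := hPc
          have hmcε : mc ≤ (1 + ε) * mc := by
            have h9 : (1 + ε) * mc = mc + ε * mc := by ring
            linarith [mul_nonneg hε.le hmc0]
          have hc1 : (1 + ε) * (h u - h a) =
              (1 + ε) * (h c - h a) + (1 + ε) * mc + (1 + ε) * Ju := by
            rw [show h u - h a = (h c - h a) + mc + Ju by linarith]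
            ring
          linarith
      have : t ≤ c := le_csSup hbddS htS
      linarith
    intro s hs
    rw [hceq] at hcS
    exact hcS.2 s hs.1 hs.2
  -- remove the margin
  have hfin : ∀ s ∈ Set.Icc a b,
      (∫ u in u₀..(φ s), 1 / ω u) ≤ (∫ u in u₀..κ, 1 / ω u) + (h s - h a) := by
    intro s hs
    have hd : 0 ≤ h s - h a := sub_nonneg.mpr (hmono hs.1)
    refine le_of_forall_pos_le_add ?_
    intro ε₀ hε₀
    have hε : 0 < ε₀ / (h s - h a + 1) := by positivity
    have hk := key _ hε s hs
    have h2 : (ε₀ / (h s - h a + 1)) * (h s - h a) ≤ ε₀ := by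
      rw [div_mul_eq_mul_div, div_le_iff₀ (by linarith)]
      have h9 : ε₀ * (h s - h a + 1) = ε₀ * (h s - h a) + ε₀ := by ring
      linarith
    have h3 : (1 + ε₀ / (h s - h a + 1)) * (h s - h a) =
        (h s - h a) + (ε₀ / (h s - h a + 1)) * (h s - h a) := by ring
    linarith
  intro s hs r hr hEq
  have h1 : (∫ u in u₀..(φ s), 1 / ω u) ≤ ∫ u in u₀..r, 1 / ω u := by
    rw [hEq]
    exact hfin s hs
  have h2 : φ s ≤ r := by
    by_contra hlt
    push_neg at hlt
    exact absurd (omStrict ω hωc hωm hωpos u₀ hu₀ r (φ s) hr hlt) (not_lt.mpr h1)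
  calc ψ s ≤ φ s := hψφ s hs
    _ ≤ r := h2
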